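/- arXiv:2112.13689 — 3 statements merged into one kernel-verified Lean document; each statement's English description precedes it below -/
import Mathlib

section
/- For every integer n ≥ 7, ex(n, {C₃, C₄}) ≥ z(n, C₄) + 1; that is, no bipartite graph attains the extremal number ex(n, {C₃, C₄}) when n ≥ 7. -/
/-!
Let `G` be bipartite and `C₄`-free. Edges added inside one side of `G` create no triangle and no
`C₄` as long as no two vertices at distance at most two in the new edges have a common neighbour
in `G`: a cycle crosses between the sides an even number of times.

* If a vertex `w` has four neighbours `x₀, x₁, x₂, x₃`, any two of them have `w` as their only
  common neighbour. Deleting `w x₁`, `w x₂` and adding the path `x₀ x₁ x₂ x₃` gains an edge, and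
  every pair at distance at most two on the path contains `x₁` or `x₂`.
* If two vertices on one side have no common neighbour, join them.
* Otherwise all degrees are at most three and any two vertices on one side have exactly one
  common neighbour. Counting the ordered pairs of a side of size `a` through their common
  neighbours on the other side, of size `b`, gives `a (a - 1) ≤ 6 b` and `4 m ≤ a (a - 1) + 6 b`.
  Hence `a, b ≤ 7`, and for each remaining `n` an explicit `{C₃, C₄}`-free graph has more than
  `m` edges.
-/

/-- A graph contains a 4-cycle: vertices `a, b, c, d` with `a ≠ c`, `b ≠ d` and
edges `ab`, `bc`, `cd`, `da` (the remaining distinctness follows from adjacency). -/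
def SimpleGraph.HasC4 {V : Type*} (G : SimpleGraph V) : Prop :=
  ∃ a b c d : V, a ≠ c ∧ b ≠ d ∧ G.Adj a b ∧ G.Adj b c ∧ G.Adj c d ∧ G.Adj d a

/-- `(X, Y)` is a bipartition of the graph `G`. -/
def SimpleGraph.IsBipartitionOf {V : Type*} (G : SimpleGraph V) (X Y : Set V) : Prop :=
  X ∪ Y = Set.univ ∧ Disjoint X Y ∧
    ∀ a b, G.Adj a b → (a ∈ X ∧ b ∈ Y) ∨ (a ∈ Y ∧ b ∈ X)

/-- `ex(n, {C₃, C₄})`: the maximum number of edges of a simple graph on `n` vertices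
containing neither a triangle nor a 4-cycle as a subgraph. -/
noncomputable def exC3C4 (n : ℕ) : ℕ :=
  sSup {m : ℕ | ∃ G : SimpleGraph (Fin n),
    G.CliqueFree 3 ∧ ¬ G.HasC4 ∧ G.edgeSet.ncard = m}

/-- `z(n, C₄)`: the maximum number of edges of a simple bipartite graph on `n` vertices
containing no 4-cycle as a subgraph. -/
noncomputable def zC4 (n : ℕ) : ℕ :=
  sSup {m : ℕ | ∃ G : SimpleGraph (Fin n), (∃ X Y, G.IsBipartitionOf X Y) ∧
    ¬ G.HasC4 ∧ G.edgeSet.ncard = m}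

open Finset

namespace SimpleGraph

variable {V : Type*}

theorem cliqueFree_three_iff {G : SimpleGraph V} :
    G.CliqueFree 3 ↔ ∀ a b c, G.Adj a b → G.Adj b c → ¬G.Adj a c := by
  classical
  constructor
  · intro h a b c hab hbc hac
    exact h {a, b, c} (is3Clique_iff.2 ⟨a, b, c, hab, hac, hbc, rfl⟩)
  · rintro h _ hs
    obtain ⟨a, b, c, hab, hac, hbc, rfl⟩ := is3Clique_iff.1 hs
    exact h a b c hab hbc hac

theorem HasC4.mono {G H : SimpleGraph V} (hle : G ≤ H) : G.HasC4 → H.HasC4 := by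
  rintro ⟨a, b, c, d, hac, hbd, hab, hbc, hcd, hda⟩
  exact ⟨a, b, c, d, hac, hbd, hle hab, hle hbc, hle hcd, hle hda⟩

theorem HasC4.of_map {W : Type*} {G : SimpleGraph V} (f : V ↪ W) :
    (G.map f).HasC4 → G.HasC4 := by
  rintro ⟨_, _, _, _, hac, hbd, h₁, h₂, h₃, h₄⟩
  obtain ⟨a, b, hab, rfl, rfl⟩ := (map_adj f G _ _).1 h₁
  obtain ⟨b', c, hbc, hb, rfl⟩ := (map_adj f G _ _).1 h₂
  obtain ⟨c', d, hcd, hc, rfl⟩ := (map_adj f G _ _).1 h₃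
  obtain ⟨d', a', hda, hd, ha⟩ := (map_adj f G _ _).1 h₄
  cases f.injective hb; cases f.injective hc; cases f.injective hd; cases f.injective ha
  exact ⟨a, b, c, d, ne_of_apply_ne f hac, ne_of_apply_ne f hbd, hab, hbc, hcd, hda⟩

theorem eq_of_not_hasC4 {G : SimpleGraph V} (h : ¬G.HasC4) {a b c d : V} (hac : a ≠ c)
    (hab : G.Adj a b) (hbc : G.Adj b c) (had : G.Adj a d) (hdc : G.Adj d c) : b = d := by
  by_contra hbd
  exact h ⟨a, b, c, d, hac, hbd, hab, hbc, hdc.symm, had.symm⟩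

theorem not_hasC4_of_card_inter_neighborFinset_le_one [Fintype V] [DecidableEq V]
    {G : SimpleGraph V} [DecidableRel G.Adj]
    (h : ∀ a c, a ≠ c → #(G.neighborFinset a ∩ G.neighborFinset c) ≤ 1) : ¬G.HasC4 := by
  rintro ⟨a, b, c, d, hac, hbd, hab, hbc, hcd, hda⟩
  have hsub : {b, d} ⊆ G.neighborFinset a ∩ G.neighborFinset c := by
    simp [insert_subset_iff, hab, hbc.symm, hcd, hda.symm]
  have := (card_le_card hsub).trans (h a c hac)
  rw [card_pair hbd] at this
  omega

theorem IsBipartiteWith.anti {G H : SimpleGraph V} {s t : Set V} (hle : H ≤ G)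
    (h : G.IsBipartiteWith s t) : H.IsBipartiteWith s t :=
  ⟨h.disjoint, fun _ _ huv => h.mem_of_adj (hle huv)⟩

theorem IsBipartiteWith.not_adj_of_mem {G : SimpleGraph V} {s t : Set V} {u v : V}
    (h : G.IsBipartiteWith s t) (hu : u ∈ s) (hv : v ∈ s) : ¬G.Adj u v :=
  fun huv => Set.disjoint_left.1 h.disjoint hv (h.mem_of_mem_adj hu huv)

section OneSide

variable {G F : SimpleGraph V} {s t : Set V}
  (hG : G.IsBipartiteWith s t) (hFs : ∀ ⦃u v⦄, F.Adj u v → u ∈ s)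
include hG hFs

theorem cliqueFree_three_sup (hF : F.CliqueFree 3)
    (hcommon : ∀ ⦃u v x⦄, F.Adj u v → G.Adj x u → G.Adj x v → False) :
    (G ⊔ F).CliqueFree 3 := by
  have hG3 := cliqueFree_three_iff.1 (hG.isBipartite.cliqueFree (by norm_num))
  have hF3 := cliqueFree_three_iff.1 hF
  refine cliqueFree_three_iff.2 fun a b c hab hbc hac => ?_
  rcases hab with hab | hab <;> rcases hbc with hbc | hbc <;> rcases hac with hac | hac
  · exact hG3 a b c hab hbc hac
  · exact hcommon hac hab.symm hbc
  · exact hcommon hbc hab hac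
  · exact hG.not_adj_of_mem (hFs hac) (hFs hbc) hab
  · exact hcommon hab hac.symm hbc.symm
  · exact hG.not_adj_of_mem (hFs hab.symm) (hFs hac.symm) hbc
  · exact hG.not_adj_of_mem (hFs hab) (hFs hbc.symm) hac
  · exact hF3 a b c hab hbc hac

theorem not_hasC4_sup (hG4 : ¬G.HasC4) (hF4 : ¬F.HasC4)
    (hcommon : ∀ ⦃u x v y⦄, u ≠ v → F.Adj u x → F.Adj x v → G.Adj y u → G.Adj y v → False) :
    ¬(G ⊔ F).HasC4 := by
  have hpath3 : ∀ ⦃u v w x⦄, G.Adj u v → G.Adj v w → G.Adj w x → u ∈ s → x ∈ s → False :=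
    fun u v w x huv hvw hwx hu hx => Set.disjoint_left.1 hG.disjoint hx <|
      hG.mem_of_mem_adj (hG.mem_of_mem_adj' (hG.mem_of_mem_adj hu huv) hvw.symm) hwx
  rintro ⟨a, b, c, d, hac, hbd, hab, hbc, hcd, hda⟩
  rcases hab with hab | hab <;> rcases hbc with hbc | hbc <;> rcases hcd with hcd | hcd <;>
    rcases hda with hda | hda
  · exact hG4 ⟨a, b, c, d, hac, hbd, hab, hbc, hcd, hda⟩
  · exact hpath3 hab hbc hcd (hFs hda.symm) (hFs hda)
  · exact hpath3 hda hab hbc (hFs hcd.symm) (hFs hcd)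
  · exact hcommon hac.symm hcd hda hbc hab.symm
  · exact hpath3 hcd hda hab (hFs hbc.symm) (hFs hbc)
  · exact hG.not_adj_of_mem (hFs hda.symm) (hFs hbc) hab
  · exact hcommon hbd hbc hcd hab hda.symm
  · exact hG.not_adj_of_mem (hFs hda.symm) (hFs hbc) hab
  · exact hpath3 hbc hcd hda (hFs hab.symm) (hFs hab)
  · exact hcommon hbd.symm hda hab hcd hbc.symm
  · exact hG.not_adj_of_mem (hFs hab.symm) (hFs hcd) hbc
  · exact hG.not_adj_of_mem (hFs hab.symm) (hFs hcd) hbc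
  · exact hcommon hac hab hbc hda hcd.symm
  · exact hG.not_adj_of_mem (hFs hbc.symm) (hFs hda) hcd
  · exact hG.not_adj_of_mem (hFs hcd.symm) (hFs hab) hda
  · exact hF4 ⟨a, b, c, d, hac, hbd, hab, hbc, hcd, hda⟩

theorem ncard_edgeSet_sup [Finite V] :
    (G ⊔ F).edgeSet.ncard = G.edgeSet.ncard + F.edgeSet.ncard := by
  have hdisj : Disjoint G F := disjoint_left.2 fun _ _ huv hF =>
    hG.not_adj_of_mem (hFs hF) (hFs hF.symm) huv
  rw [edgeSet_sup, Set.ncard_union_eq (disjoint_edgeSet.2 hdisj)]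

end OneSide

instance (n : ℕ) : DecidableRel (pathGraph n).Adj := fun _ _ => decidable_of_iff' _ pathGraph_adj

theorem pathGraph_four_not_hasC4 : ¬(pathGraph 4).HasC4 := by
  unfold HasC4
  decide

theorem ncard_edgeSet_pathGraph_four : (pathGraph 4).edgeSet.ncard = 3 := by
  rw [← coe_edgeFinset, Set.ncard_coe_finset]
  decide

theorem exists_embedding_adj [Fintype V] {G : SimpleGraph V} [DecidableRel G.Adj] {w : V}
    {k : ℕ} (h : k ≤ G.degree w) : ∃ f : Fin k ↪ V, ∀ i, G.Adj w (f i) := by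
  obtain ⟨g⟩ := Function.Embedding.nonempty_of_card_le (α := Fin k) (β := G.neighborSet w)
    (by rwa [Fintype.card_fin, card_neighborSet_eq_degree])
  exact ⟨g.trans (Function.Embedding.subtype _), fun i => (g i).2⟩

theorem mem_of_map_adj {W : Type*} {H : SimpleGraph W} {f : W ↪ V} {s : Set V}
    (hfs : ∀ i, f i ∈ s) {u v : V} (h : (H.map f).Adj u v) : u ∈ s := by
  obtain ⟨i, j, -, rfl, rfl⟩ := (map_adj f _ _ _).1 h
  exact hfs i

def pathSurgery (G : SimpleGraph V) (w : V) (f : Fin 4 ↪ V) : SimpleGraph V :=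
  G.deleteEdges {s(w, f 1), s(w, f 2)} ⊔ (pathGraph 4).map f

section PathSurgery

variable {G : SimpleGraph V} {s t : Set V} {w : V} {f : Fin 4 ↪ V}
  (hG : G.IsBipartiteWith s t) (hf : ∀ i, G.Adj w (f i)) (hfs : ∀ i, f i ∈ s)

include hf in
theorem no_common_neighbor_deleteEdges (hC4 : ¬G.HasC4) {i j : Fin 4} (hij : i ≠ j)
    (h : i = 1 ∨ i = 2 ∨ j = 1 ∨ j = 2) {y : V}
    (hi : (G.deleteEdges {s(w, f 1), s(w, f 2)}).Adj y (f i))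
    (hj : (G.deleteEdges {s(w, f 1), s(w, f 2)}).Adj y (f j)) : False := by
  obtain rfl : y = w := eq_of_not_hasC4 hC4 (f.injective.ne hij) (deleteEdges_le _ hi).symm
    (deleteEdges_le _ hj) (hf i).symm (hf j)
  rw [deleteEdges_adj] at hi hj
  rcases h with rfl | rfl | rfl | rfl <;> simp_all

include hG hf hfs in
theorem cliqueFree_three_pathSurgery (hC4 : ¬G.HasC4) : (pathSurgery G w f).CliqueFree 3 := by
  have hnear : ∀ i j : Fin 4, (pathGraph 4).Adj i j → i = 1 ∨ i = 2 ∨ j = 1 ∨ j = 2 := by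
    decide
  refine cliqueFree_three_sup (hG.anti (deleteEdges_le _)) (fun _ _ => mem_of_map_adj hfs)
    (cliqueFree_map_iff.2 cliqueFree_hasse_three) fun _ _ y huv hu hv => ?_
  obtain ⟨i, j, hij, rfl, rfl⟩ := (map_adj f _ _ _).1 huv
  exact no_common_neighbor_deleteEdges hf hC4 hij.ne (hnear i j hij) hu hv

include hG hf hfs in
theorem not_hasC4_pathSurgery (hC4 : ¬G.HasC4) : ¬(pathSurgery G w f).HasC4 := by
  have hnear : ∀ i k j : Fin 4, (pathGraph 4).Adj i k → (pathGraph 4).Adj k j → i ≠ j →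
      i = 1 ∨ i = 2 ∨ j = 1 ∨ j = 2 := by
    decide
  refine not_hasC4_sup (hG.anti (deleteEdges_le _)) (fun _ _ => mem_of_map_adj hfs)
    (fun h => hC4 (h.mono (deleteEdges_le _))) (fun h => pathGraph_four_not_hasC4 (h.of_map f))
    fun _ _ _ y huv hux hxv hu hv => ?_
  obtain ⟨i, k, hik, rfl, rfl⟩ := (map_adj f _ _ _).1 hux
  obtain ⟨k', j, hkj, hk, rfl⟩ := (map_adj f _ _ _).1 hxv
  cases f.injective hk
  have hij : i ≠ j := ne_of_apply_ne f huv
  exact no_common_neighbor_deleteEdges hf hC4 hij (hnear i k j hik hkj hij) hu hv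

include hG hf hfs in
theorem ncard_edgeSet_pathSurgery [Finite V] :
    (pathSurgery G w f).edgeSet.ncard = G.edgeSet.ncard + 1 := by
  have hsub : {s(w, f 1), s(w, f 2)} ⊆ G.edgeSet := by
    simp [Set.insert_subset_iff, hf]
  have hne : s(w, f 1) ≠ s(w, f 2) := Sym2.congr_right.not.2 (f.injective.ne (by decide))
  rw [pathSurgery, ncard_edgeSet_sup (hG.anti (deleteEdges_le _)) fun _ _ => mem_of_map_adj hfs,
    edgeSet_map, Set.ncard_image_of_injective _ f.sym2Map.injective, ncard_edgeSet_pathGraph_four,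
    edgeSet_deleteEdges, ← Set.ncard_sdiff_add_ncard_of_subset hsub, Set.ncard_pair hne]

end PathSurgery

section AddEdge

variable {G : SimpleGraph V} {s t : Set V} {u v : V}

theorem eq_of_edge_adj_of_edge_adj {a b c : V} (hab : (edge u v).Adj a b)
    (hbc : (edge u v).Adj b c) : a = c := by
  rw [edge_adj] at hab hbc
  grind

theorem mem_of_edge_adj (hu : u ∈ s) (hv : v ∈ s) {a b : V} (h : (edge u v).Adj a b) : a ∈ s := by
  rw [edge_adj] at h
  rcases h with ⟨⟨rfl, -⟩ | ⟨rfl, -⟩, -⟩ <;> assumption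

variable (hG : G.IsBipartiteWith s t) (hu : u ∈ s) (hv : v ∈ s)
include hG hu hv

theorem cliqueFree_three_sup_edge (hcommon : ∀ y, ¬(G.Adj y u ∧ G.Adj y v)) :
    (G ⊔ edge u v).CliqueFree 3 := by
  refine cliqueFree_three_sup hG (fun _ _ => mem_of_edge_adj hu hv)
    (cliqueFree_three_iff.2 fun a b c hab hbc hac => hac.ne (eq_of_edge_adj_of_edge_adj hab hbc))
    fun a b y hab ha hb => ?_
  rw [edge_adj] at hab
  rcases hab with ⟨⟨rfl, rfl⟩ | ⟨rfl, rfl⟩, -⟩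
  exacts [hcommon y ⟨ha, hb⟩, hcommon y ⟨hb, ha⟩]

theorem not_hasC4_sup_edge (hC4 : ¬G.HasC4) : ¬(G ⊔ edge u v).HasC4 :=
  not_hasC4_sup hG (fun _ _ => mem_of_edge_adj hu hv) hC4
    (fun ⟨_, _, _, _, hac, _, hab, hbc, _, _⟩ => hac (eq_of_edge_adj_of_edge_adj hab hbc))
    fun _ _ _ _ hne hux hxv _ _ => hne (eq_of_edge_adj_of_edge_adj hux hxv)

theorem ncard_edgeSet_sup_edge [Finite V] (huv : u ≠ v) :
    (G ⊔ edge u v).edgeSet.ncard = G.edgeSet.ncard + 1 := by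
  rw [ncard_edgeSet_sup hG fun _ _ => mem_of_edge_adj hu hv, edgeSet_edge_of_ne huv,
    Set.ncard_singleton]

end AddEdge

section Counting

variable [Fintype V] [DecidableEq V] {G : SimpleGraph V} [DecidableRel G.Adj] {s t : Finset V}
  (hG : G.IsBipartiteWith s t)
include hG

theorem sum_card_offDiag_neighborFinset_le (hC4 : ¬G.HasC4) :
    ∑ y ∈ t, #(G.neighborFinset y).offDiag ≤ #s.offDiag := by
  rw [← card_biUnion]
  · refine card_le_card fun p hp => ?_
    simp only [mem_biUnion, mem_offDiag, mem_neighborFinset] at hp ⊢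
    obtain ⟨y, hy, h₁, h₂, hne⟩ := hp
    exact ⟨hG.mem_of_mem_adj' hy h₁.symm, hG.mem_of_mem_adj' hy h₂.symm, hne⟩
  · intro y _ y' _ hyy'
    refine Finset.disjoint_left.2 fun p hp hp' => hyy' ?_
    simp only [mem_offDiag, mem_neighborFinset] at hp hp'
    exact eq_of_not_hasC4 hC4 hp.2.2 hp.1.symm hp.2.1 hp'.1.symm hp'.2.1

theorem card_offDiag_le_sum_card_offDiag_neighborFinset
    (hcommon : ∀ u ∈ s, ∀ v ∈ s, u ≠ v → ∃ y, G.Adj y u ∧ G.Adj y v) :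
    #s.offDiag ≤ ∑ y ∈ t, #(G.neighborFinset y).offDiag := by
  refine (card_le_card fun p hp => ?_).trans card_biUnion_le
  obtain ⟨hu, hv, hne⟩ := mem_offDiag.1 hp
  obtain ⟨y, hyu, hyv⟩ := hcommon _ hu _ hv hne
  simp only [mem_biUnion, mem_offDiag, mem_neighborFinset]
  exact ⟨y, hG.mem_of_mem_adj hu hyu.symm, hyu, hyv, hne⟩

variable (hdeg : ∀ v, G.degree v ≤ 3)
include hdeg

theorem card_mul_card_sub_card_le
    (hcommon : ∀ u ∈ s, ∀ v ∈ s, u ≠ v → ∃ y, G.Adj y u ∧ G.Adj y v) :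
    #s * #s - #s ≤ 6 * #t := by
  rw [← offDiag_card]
  refine (card_offDiag_le_sum_card_offDiag_neighborFinset hG hcommon).trans ?_
  rw [mul_comm, ← smul_eq_mul, ← sum_const]
  refine sum_le_sum fun y _ => ?_
  rw [offDiag_card, card_neighborFinset_eq_degree]
  have := hdeg y
  interval_cases G.degree y <;> norm_num

theorem four_mul_card_edgeFinset_le (hC4 : ¬G.HasC4) :
    4 * #G.edgeFinset ≤ #s * #s - #s + 6 * #t := by
  have hpoint : ∀ y, 4 * #(G.neighborFinset y) ≤ #(G.neighborFinset y).offDiag + 6 := by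
    intro y
    rw [offDiag_card, card_neighborFinset_eq_degree]
    have := hdeg y
    interval_cases G.degree y <;> norm_num
  calc 4 * #G.edgeFinset = ∑ y ∈ t, 4 * #(G.neighborFinset y) := by
        simp_rw [card_neighborFinset_eq_degree]
        rw [← mul_sum, isBipartiteWith_sum_degrees_eq_card_edges' hG]
    _ ≤ ∑ y ∈ t, (#(G.neighborFinset y).offDiag + 6) := sum_le_sum fun y _ => hpoint y
    _ ≤ #s * #s - #s + 6 * #t := by
        rw [sum_add_distrib, sum_const, smul_eq_mul, mul_comm, ← offDiag_card]
        exact Nat.add_le_add_right (sum_card_offDiag_neighborFinset_le hG hC4) _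

end Counting

end SimpleGraph

theorem order_size_cases_of_double_counting {a b m n : ℕ} (hab : a + b = n) (hn : 7 ≤ n)
    (ha : a * a - a ≤ 6 * b) (hb : b * b - b ≤ 6 * a)
    (hma : 4 * m ≤ a * a - a + 6 * b) (hmb : 4 * m ≤ b * b - b + 6 * a) :
    n = 7 ∧ m ≤ 7 ∨ n = 8 ∧ m ≤ 9 ∨ n = 9 ∧ m ≤ 10 ∨ n = 10 ∧ m ≤ 12 ∨
      n = 11 ∧ m ≤ 14 ∨ n = 12 ∧ m ≤ 16 ∨ n = 14 ∧ m ≤ 21 := by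
  have hle : ∀ x y : ℕ, x * x - x ≤ 6 * y → y ≤ x → x ≤ 7 := fun x y h hyx => by
    by_contra! hx
    have : 8 * x ≤ x * x := Nat.mul_le_mul_right x hx
    omega
  obtain ⟨ha7, hb7⟩ : a ≤ 7 ∧ b ≤ 7 := by
    rcases le_total b a with h | h
    · exact ⟨hle a b ha h, h.trans (hle a b ha h)⟩
    · exact ⟨h.trans (hle b a hb h), hle b a hb h⟩
  subst hab
  interval_cases a <;> interval_cases b <;> omega

open SimpleGraph

theorem le_exC3C4 {n : ℕ} (G : SimpleGraph (Fin n)) (h3 : G.CliqueFree 3) (h4 : ¬G.HasC4) :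
    G.edgeSet.ncard ≤ exC3C4 n :=
  le_csSup ⟨Nat.card (Sym2 (Fin n)), by rintro _ ⟨H, -, -, rfl⟩; exact Set.ncard_le_card _⟩
    ⟨G, h3, h4, rfl⟩

theorem exists_ncard_edgeSet_eq_zC4 (n : ℕ) : ∃ G : SimpleGraph (Fin n),
    (∃ X Y, G.IsBipartitionOf X Y) ∧ ¬G.HasC4 ∧ G.edgeSet.ncard = zC4 n := by
  refine Nat.sSup_mem (s := {m | ∃ G : SimpleGraph (Fin n),
    (∃ X Y, G.IsBipartitionOf X Y) ∧ ¬G.HasC4 ∧ G.edgeSet.ncard = m})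
    ⟨0, ⊥, ⟨Set.univ, ∅, by simp [IsBipartitionOf]⟩, fun ⟨_, _, _, _, _, _, h, _⟩ => h, by simp⟩
    ⟨Nat.card (Sym2 (Fin n)), ?_⟩
  rintro _ ⟨H, -, -, rfl⟩
  exact Set.ncard_le_card _

theorem le_exC3C4_of_sum_degree_eq {n m : ℕ} (G : SimpleGraph (Fin n)) [DecidableRel G.Adj]
    (h3 : ∀ a b c, G.Adj a b → G.Adj b c → ¬G.Adj a c)
    (h4 : ∀ a c, a ≠ c → #(G.neighborFinset a ∩ G.neighborFinset c) ≤ 1)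
    (hm : ∑ v, G.degree v = 2 * m) : m ≤ exC3C4 n := by
  have hcard : G.edgeSet.ncard = m := by
    rw [← coe_edgeFinset, Set.ncard_coe_finset]
    have := G.sum_degrees_eq_twice_card_edges
    omega
  exact hcard ▸ le_exC3C4 G (cliqueFree_three_iff.2 h3)
    (not_hasC4_of_card_inter_neighborFinset_le_one h4)

instance {n : ℕ} (L : List (Fin n × Fin n)) :
    DecidableRel (fromRel fun a b => (a, b) ∈ L).Adj :=
  fun _ _ => inferInstanceAs (Decidable (_ ∧ _))

theorem eight_le_exC3C4_seven : 8 ≤ exC3C4 7 :=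
  le_exC3C4_of_sum_degree_eq (fromRel fun a b : Fin 7 => (a, b) ∈
    [(0, 5), (0, 4), (3, 5), (2, 4), (2, 3), (5, 6), (1, 6), (1, 4)])
    (by decide) (by decide) (by decide)

theorem ten_le_exC3C4_eight : 10 ≤ exC3C4 8 :=
  le_exC3C4_of_sum_degree_eq (fromRel fun a b : Fin 8 => (a, b) ∈
    [(2, 6), (4, 5), (0, 4), (0, 1), (2, 4), (5, 7), (2, 3), (1, 3), (6, 7), (1, 7)])
    (by decide) (by decide) (by decide)

theorem eleven_le_exC3C4_nine : 11 ≤ exC3C4 9 :=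
  le_exC3C4_of_sum_degree_eq (fromRel fun a b : Fin 9 => (a, b) ∈
    [(4, 5), (1, 4), (1, 7), (3, 5), (6, 8), (5, 6), (2, 6), (6, 7), (0, 2), (0, 1), (0, 3)])
    (by decide) (by decide) (by decide)

theorem thirteen_le_exC3C4_ten : 13 ≤ exC3C4 10 :=
  le_exC3C4_of_sum_degree_eq (fromRel fun a b : Fin 10 => (a, b) ∈
    [(3, 5), (1, 5), (0, 1), (4, 5), (4, 9), (6, 9), (0, 9), (0, 2), (0, 7), (5, 8), (3, 7),
      (6, 8), (2, 8)])
    (by decide) (by decide) (by decide)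

theorem fifteen_le_exC3C4_eleven : 15 ≤ exC3C4 11 :=
  le_exC3C4_of_sum_degree_eq (fromRel fun a b : Fin 11 => (a, b) ∈
    [(9, 10), (3, 8), (7, 9), (0, 6), (5, 7), (0, 5), (6, 8), (2, 3), (4, 9), (1, 7), (3, 9),
      (1, 6), (1, 2), (0, 4), (6, 10)])
    (by decide) (by decide) (by decide)

theorem seventeen_le_exC3C4_twelve : 17 ≤ exC3C4 12 :=
  le_exC3C4_of_sum_degree_eq (fromRel fun a b : Fin 12 => (a, b) ∈
    [(3, 7), (5, 8), (3, 9), (2, 7), (3, 10), (3, 6), (0, 11), (4, 6), (1, 4), (1, 8), (5, 10),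
      (0, 1), (1, 9), (5, 11), (2, 4), (2, 5), (6, 11)])
    (by decide) (by decide) (by decide)

theorem twenty_two_le_exC3C4_fourteen : 22 ≤ exC3C4 14 :=
  le_exC3C4_of_sum_degree_eq (fromRel fun a b : Fin 14 => (a, b) ∈
    [(4, 9), (3, 10), (0, 2), (3, 8), (1, 9), (5, 8), (9, 11), (2, 7), (4, 10), (2, 9), (1, 12),
      (5, 7), (4, 5), (2, 13), (7, 12), (1, 3), (8, 13), (6, 10), (8, 11), (0, 3), (6, 11), (6, 7)])
    (by decide) (by decide) (by decide)

theorem ncard_edgeSet_lt_exC3C4_of_four_le_degree {n : ℕ} {G : SimpleGraph (Fin n)}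
    [DecidableRel G.Adj] {s t : Set (Fin n)} (hG : G.IsBipartiteWith s t) (hC4 : ¬G.HasC4)
    {w : Fin n} (hw : 4 ≤ G.degree w) : G.edgeSet.ncard < exC3C4 n := by
  obtain ⟨f, hf⟩ := exists_embedding_adj hw
  have key : ∀ {s t : Set (Fin n)}, G.IsBipartiteWith s t → (∀ i, f i ∈ s) →
      G.edgeSet.ncard < exC3C4 n := fun hG' hfs => by
    rw [Nat.lt_iff_add_one_le, ← ncard_edgeSet_pathSurgery hG' hf hfs]
    exact le_exC3C4 _ (cliqueFree_three_pathSurgery hG' hf hfs hC4)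
      (not_hasC4_pathSurgery hG' hf hfs hC4)
  rcases hG.mem_of_adj (hf 0) with ⟨hw, -⟩ | ⟨hw, -⟩
  · exact key hG.symm fun i => hG.mem_of_mem_adj hw (hf i)
  · exact key hG fun i => hG.mem_of_mem_adj' hw (hf i).symm

theorem ncard_edgeSet_lt_exC3C4_of_forall_not_adj {n : ℕ} {G : SimpleGraph (Fin n)}
    {s t : Set (Fin n)} (hG : G.IsBipartiteWith s t) (hC4 : ¬G.HasC4) {u v : Fin n}
    (hu : u ∈ s) (hv : v ∈ s) (huv : u ≠ v) (hcommon : ∀ y, ¬(G.Adj y u ∧ G.Adj y v)) :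
    G.edgeSet.ncard < exC3C4 n := by
  rw [Nat.lt_iff_add_one_le, ← ncard_edgeSet_sup_edge hG hu hv huv]
  exact le_exC3C4 _ (cliqueFree_three_sup_edge hG hu hv hcommon) (not_hasC4_sup_edge hG hu hv hC4)

theorem ncard_edgeSet_lt_exC3C4_of_degree_le_three {n : ℕ} (hn : 7 ≤ n)
    {G : SimpleGraph (Fin n)} [DecidableRel G.Adj] {s t : Finset (Fin n)}
    (hG : G.IsBipartiteWith s t) (hst : #s + #t = n) (hC4 : ¬G.HasC4)
    (hdeg : ∀ v, G.degree v ≤ 3)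
    (hs : ∀ u ∈ s, ∀ v ∈ s, u ≠ v → ∃ y, G.Adj y u ∧ G.Adj y v)
    (ht : ∀ u ∈ t, ∀ v ∈ t, u ≠ v → ∃ y, G.Adj y u ∧ G.Adj y v) :
    G.edgeSet.ncard < exC3C4 n := by
  rw [← coe_edgeFinset, Set.ncard_coe_finset]
  rcases order_size_cases_of_double_counting hst hn (card_mul_card_sub_card_le hG hdeg hs)
      (card_mul_card_sub_card_le hG.symm hdeg ht) (four_mul_card_edgeFinset_le hG hdeg hC4)
      (four_mul_card_edgeFinset_le hG.symm hdeg hC4) with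
    ⟨rfl, hm⟩ | ⟨rfl, hm⟩ | ⟨rfl, hm⟩ | ⟨rfl, hm⟩ | ⟨rfl, hm⟩ | ⟨rfl, hm⟩ | ⟨rfl, hm⟩
  exacts [(Nat.lt_succ_of_le hm).trans_le eight_le_exC3C4_seven,
    (Nat.lt_succ_of_le hm).trans_le ten_le_exC3C4_eight,
    (Nat.lt_succ_of_le hm).trans_le eleven_le_exC3C4_nine,
    (Nat.lt_succ_of_le hm).trans_le thirteen_le_exC3C4_ten,
    (Nat.lt_succ_of_le hm).trans_le fifteen_le_exC3C4_eleven,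
    (Nat.lt_succ_of_le hm).trans_le seventeen_le_exC3C4_twelve,
    (Nat.lt_succ_of_le hm).trans_le twenty_two_le_exC3C4_fourteen]

theorem ncard_edgeSet_lt_exC3C4 {n : ℕ} (hn : 7 ≤ n) {G : SimpleGraph (Fin n)}
    {X Y : Set (Fin n)} (hbip : G.IsBipartitionOf X Y) (hC4 : ¬G.HasC4) :
    G.edgeSet.ncard < exC3C4 n := by
  classical
  have hG : G.IsBipartiteWith X Y := ⟨hbip.2.1, hbip.2.2⟩
  by_cases hmax : ∃ w, 4 ≤ G.degree w
  · obtain ⟨w, hw⟩ := hmax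
    exact ncard_edgeSet_lt_exC3C4_of_four_le_degree hG hC4 hw
  by_cases hX : ∃ u ∈ X, ∃ v ∈ X, u ≠ v ∧ ∀ y, ¬(G.Adj y u ∧ G.Adj y v)
  · obtain ⟨u, hu, v, hv, huv, hcommon⟩ := hX
    exact ncard_edgeSet_lt_exC3C4_of_forall_not_adj hG hC4 hu hv huv hcommon
  by_cases hY : ∃ u ∈ Y, ∃ v ∈ Y, u ≠ v ∧ ∀ y, ¬(G.Adj y u ∧ G.Adj y v)
  · obtain ⟨u, hu, v, hv, huv, hcommon⟩ := hY
    exact ncard_edgeSet_lt_exC3C4_of_forall_not_adj hG.symm hC4 hu hv huv hcommon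
  push Not at hmax hX hY
  refine ncard_edgeSet_lt_exC3C4_of_degree_le_three hn (s := X.toFinset) (t := Y.toFinset)
    (by simpa using hG) ?_ hC4 (fun v => Nat.le_of_lt_succ (hmax v)) (by simpa using hX)
    (by simpa using hY)
  rw [← card_union_of_disjoint (Set.disjoint_toFinset.2 hbip.2.1), ← Set.toFinset_union]
  simp [hbip.1]

/-- For every integer `n ≥ 7`, `ex(n, {C₃, C₄}) ≥ z(n, C₄) + 1`; in particular no
bipartite graph attains the extremal number `ex(n, {C₃, C₄})` when `n ≥ 7`. -/
theorem statement3 : ∀ n : ℕ, 7 ≤ n → zC4 n + 1 ≤ exC3C4 n := by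
  intro n hn
  obtain ⟨G, ⟨X, Y, hbip⟩, hC4, hG⟩ := exists_ncard_edgeSet_eq_zC4 n
  exact hG ▸ ncard_edgeSet_lt_exC3C4 hn hbip hC4
end

section
/- Let G be a simple bipartite graph with bipartition (X, Y) containing no 4-cycle, and let u ∈ X with neighborhood N(u) = {u₁, …, u_t} ⊆ Y. For each 1 ≤ i ≤ t set Nᵢ = N(uᵢ) \ {u} ⊆ X; these sets are pairwise disjoint. For each i, let Gᵢ be a simple graph on vertex set Nᵢ containing neither a triangle nor a 4-cycle. Let H be the graph on the vertex set of G obtained from G by deleting, for each i, all edges between uᵢ and Nᵢ, and adding all edges of Gᵢ. Then H contains neither a triangle nor a 4-cycle. -/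
/-! New edges of `H` join two vertices of some `Nᵢ ⊆ X`, while the surviving edges of `G` join
`X` to `Y`. Two new edges sharing a vertex `w` come from the same `Gᵢ`, because `uᵢ` is the only
common neighbour of `u` and `w` in the `C₄`-free graph `G`. Two vertices `p ≠ q` of one `Nᵢ` are
not joined by a path `p – r – q` of old edges: `r` and `uᵢ` would be common neighbours of `p` and
`q`, so `r = uᵢ`, but the edges `uᵢ p` were deleted. Hence a triangle or 4-cycle of `H` with a new
edge either lies in a single `Gᵢ` or contains such a path, and one without new edges lies in `G`.
-/

namespace SimpleGraph

variable {V : Type*} {G : SimpleGraph V} {X Y : Set V}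

theorem IsBipartitionOf.mem_iff_notMem_of_adj (hbip : G.IsBipartitionOf X Y) {a b : V}
    (hab : G.Adj a b) : a ∈ X ↔ b ∉ X := by
  obtain ⟨-, hdisj, hside⟩ := hbip
  rcases hside a b hab with ⟨ha, hb⟩ | ⟨ha, hb⟩
  · exact iff_of_true ha (Set.disjoint_right.mp hdisj hb)
  · exact iff_of_false (Set.disjoint_right.mp hdisj ha) (not_not_intro hb)

theorem commonNeighbors_subsingleton_of_not_hasC4 (hC4 : ¬G.HasC4) {v w : V} (hvw : v ≠ w) :
    (G.commonNeighbors v w).Subsingleton := by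
  intro x hx y hy
  by_contra hxy
  exact hC4 ⟨v, x, w, y, hvw, hxy, hx.1, hx.2.symm, hy.2, hy.1.symm⟩

/-- The edges `uᵢ y` with `uᵢ ∈ N(u)` and `y ∈ Nᵢ = N(uᵢ) \ {u}`. -/
def spokeEdges (G : SimpleGraph V) (u : V) : Set (Sym2 V) :=
  {e | ∃ x ∈ G.neighborSet u, ∃ y ∈ G.neighborSet x \ {u}, e = s(x, y)}

def spokeReplacement (G : SimpleGraph V) (u : V) (GG : V → SimpleGraph V) : SimpleGraph V :=
  G.deleteEdges (G.spokeEdges u) ⊔ ⨆ x ∈ G.neighborSet u, GG x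

def IsSupportedOnFans (G : SimpleGraph V) (u : V) (GG : V → SimpleGraph V) : Prop :=
  ∀ x ∈ G.neighborSet u, ∀ a b : V, (GG x).Adj a b →
    a ∈ G.neighborSet x \ {u} ∧ b ∈ G.neighborSet x \ {u}

variable {u : V} {GG : V → SimpleGraph V}

theorem spokeReplacement_adj {a b : V} :
    (G.spokeReplacement u GG).Adj a b ↔
      (G.Adj a b ∧ s(a, b) ∉ G.spokeEdges u) ∨ ∃ x ∈ G.neighborSet u, (GG x).Adj a b := by
  simp only [spokeReplacement, sup_adj, deleteEdges_adj, iSup_adj, exists_prop]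

theorem exists_adj_of_spokeReplacement_adj_of_mem_of_mem (hbip : G.IsBipartitionOf X Y)
    {a b : V} (hab : (G.spokeReplacement u GG).Adj a b) (ha : a ∈ X) (hb : b ∈ X) :
    ∃ x ∈ G.neighborSet u, (GG x).Adj a b :=
  (spokeReplacement_adj.mp hab).resolve_left fun h =>
    (hbip.mem_iff_notMem_of_adj h.1).mp ha hb

namespace IsSupportedOnFans

theorem eq_of_adj_of_adj (hfan : G.IsSupportedOnFans u GG) (hC4 : ¬G.HasC4) {x x' a b c : V}
    (hx : x ∈ G.neighborSet u) (hx' : x' ∈ G.neighborSet u)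
    (hab : (GG x).Adj a b) (hbc : (GG x').Adj b c) : x = x' := by
  obtain ⟨hxb, hbu⟩ := (hfan x hx a b hab).2
  obtain ⟨hx'b, -⟩ := (hfan x' hx' b c hbc).1
  exact commonNeighbors_subsingleton_of_not_hasC4 hC4 (Ne.symm hbu)
    ⟨hx, hxb.symm⟩ ⟨hx', hx'b.symm⟩

theorem mem_of_adj (hfan : G.IsSupportedOnFans u GG) (hbip : G.IsBipartitionOf X Y)
    (hu : u ∈ X) {x a b : V} (hx : x ∈ G.neighborSet u) (hab : (GG x).Adj a b) : a ∈ X := by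
  by_contra ha
  exact (hbip.mem_iff_notMem_of_adj hx).mp hu
    ((hbip.mem_iff_notMem_of_adj (hfan x hx a b hab).1.1).mpr ha)

theorem adj_of_spokeReplacement_adj_of_notMem (hfan : G.IsSupportedOnFans u GG)
    (hbip : G.IsBipartitionOf X Y) (hu : u ∈ X) {a b : V}
    (hab : (G.spokeReplacement u GG).Adj a b) (hb : b ∉ X) :
    G.Adj a b ∧ s(a, b) ∉ G.spokeEdges u := by
  refine (spokeReplacement_adj.mp hab).resolve_right ?_
  rintro ⟨x, hx, hab⟩
  exact hb (hfan.mem_of_adj hbip hu hx hab.symm)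

theorem not_spokeReplacement_adj_of_notMem_of_notMem (hfan : G.IsSupportedOnFans u GG)
    (hbip : G.IsBipartitionOf X Y) (hu : u ∈ X) {a b : V} (ha : a ∉ X) (hb : b ∉ X) :
    ¬(G.spokeReplacement u GG).Adj a b := fun hab =>
  have hab := (hfan.adj_of_spokeReplacement_adj_of_notMem hbip hu hab hb).1
  ha ((hbip.mem_iff_notMem_of_adj hab).mpr hb)

theorem not_adj_of_adj_of_notMem (hfan : G.IsSupportedOnFans u GG)
    (hbip : G.IsBipartitionOf X Y) (hu : u ∈ X) (hC4 : ¬G.HasC4) {x p q r : V}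
    (hx : x ∈ G.neighborSet u) (hp : p ∈ G.neighborSet x \ {u}) (hq : q ∈ G.neighborSet x \ {u})
    (hpq : p ≠ q) (hr : r ∉ X) (hpr : (G.spokeReplacement u GG).Adj p r) :
    ¬(G.spokeReplacement u GG).Adj r q := by
  intro hrq
  obtain ⟨hpr, hprD⟩ := hfan.adj_of_spokeReplacement_adj_of_notMem hbip hu hpr hr
  have hqr := (hfan.adj_of_spokeReplacement_adj_of_notMem hbip hu hrq.symm hr).1
  obtain rfl : r = x := commonNeighbors_subsingleton_of_not_hasC4 hC4 hpq
    ⟨hpr, hqr⟩ ⟨hp.1.symm, hq.1.symm⟩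
  exact hprD ⟨r, hx, p, hp, Sym2.eq_swap⟩

theorem adj_of_spokeReplacement_adj (hfan : G.IsSupportedOnFans u GG)
    (hbip : G.IsBipartitionOf X Y) (hu : u ∈ X) ⦃a b : V⦄
    (hab : (G.spokeReplacement u GG).Adj a b) (h : ¬(a ∈ X ∧ b ∈ X)) : G.Adj a b := by
  by_cases hb : b ∈ X
  · have ha : a ∉ X := fun ha => h ⟨ha, hb⟩
    exact (hfan.adj_of_spokeReplacement_adj_of_notMem hbip hu hab.symm ha).1.symm
  · exact (hfan.adj_of_spokeReplacement_adj_of_notMem hbip hu hab hb).1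

theorem not_triangle_of_mem_of_mem (hfan : G.IsSupportedOnFans u GG)
    (hbip : G.IsBipartitionOf X Y) (hu : u ∈ X) (hC4 : ¬G.HasC4)
    (hfree : ∀ x ∈ G.neighborSet u, (GG x).CliqueFree 3) ⦃a b c : V⦄ (ha : a ∈ X) (hb : b ∈ X) :
    ¬((G.spokeReplacement u GG).Adj a b ∧ (G.spokeReplacement u GG).Adj b c ∧
      (G.spokeReplacement u GG).Adj c a) := by
  classical
  rintro ⟨hab, hbc, hca⟩
  obtain ⟨x, hx, hab'⟩ := exists_adj_of_spokeReplacement_adj_of_mem_of_mem hbip hab ha hb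
  obtain ⟨haN, hbN⟩ := hfan x hx a b hab'
  by_cases hc : c ∈ X
  · obtain ⟨y, hy, hbc'⟩ := exists_adj_of_spokeReplacement_adj_of_mem_of_mem hbip hbc hb hc
    obtain ⟨z, hz, hca'⟩ := exists_adj_of_spokeReplacement_adj_of_mem_of_mem hbip hca hc ha
    obtain rfl := hfan.eq_of_adj_of_adj hC4 hx hy hab' hbc'
    obtain rfl := hfan.eq_of_adj_of_adj hC4 hz hx hca' hab'
    exact hfree z hz {a, b, c} (is3Clique_triple_iff.mpr ⟨hab', hca'.symm, hbc'⟩)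
  · exact hfan.not_adj_of_adj_of_notMem hbip hu hC4 hx haN hbN hab'.ne hc hca.symm hbc.symm

theorem not_cycle4_of_mem_of_mem (hfan : G.IsSupportedOnFans u GG)
    (hbip : G.IsBipartitionOf X Y) (hu : u ∈ X) (hC4 : ¬G.HasC4)
    (hfree : ∀ x ∈ G.neighborSet u, ¬(GG x).HasC4) ⦃a b c d : V⦄ (ha : a ∈ X) (hb : b ∈ X)
    (hac : a ≠ c) (hbd : b ≠ d) :
    ¬((G.spokeReplacement u GG).Adj a b ∧ (G.spokeReplacement u GG).Adj b c ∧
      (G.spokeReplacement u GG).Adj c d ∧ (G.spokeReplacement u GG).Adj d a) := by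
  rintro ⟨hab, hbc, hcd, hda⟩
  obtain ⟨x, hx, hab'⟩ := exists_adj_of_spokeReplacement_adj_of_mem_of_mem hbip hab ha hb
  obtain ⟨haN, hbN⟩ := hfan x hx a b hab'
  by_cases hc : c ∈ X
  · obtain ⟨y, hy, hbc'⟩ := exists_adj_of_spokeReplacement_adj_of_mem_of_mem hbip hbc hb hc
    obtain rfl := hfan.eq_of_adj_of_adj hC4 hx hy hab' hbc'
    have hcN := (hfan x hx b c hbc').2
    by_cases hd : d ∈ X
    · obtain ⟨y, hy, hcd'⟩ := exists_adj_of_spokeReplacement_adj_of_mem_of_mem hbip hcd hc hd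
      obtain ⟨z, hz, hda'⟩ := exists_adj_of_spokeReplacement_adj_of_mem_of_mem hbip hda hd ha
      obtain rfl := hfan.eq_of_adj_of_adj hC4 hx hy hbc' hcd'
      obtain rfl := hfan.eq_of_adj_of_adj hC4 hz hx hda' hab'
      exact hfree z hz ⟨a, b, c, d, hac, hbd, hab', hbc', hcd', hda'⟩
    · exact hfan.not_adj_of_adj_of_notMem hbip hu hC4 hx hcN haN hac.symm hd hcd hda
  · have hd : d ∈ X := by
      by_contra hd
      exact hfan.not_spokeReplacement_adj_of_notMem_of_notMem hbip hu hc hd hcd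
    obtain ⟨z, hz, hda'⟩ := exists_adj_of_spokeReplacement_adj_of_mem_of_mem hbip hda hd ha
    obtain rfl := hfan.eq_of_adj_of_adj hC4 hz hx hda' hab'
    exact hfan.not_adj_of_adj_of_notMem hbip hu hC4 hz hbN (hfan z hz d a hda').1 hbd hc hbc hcd

theorem cliqueFree_three_spokeReplacement (hfan : G.IsSupportedOnFans u GG)
    (hbip : G.IsBipartitionOf X Y) (hu : u ∈ X) (hC4 : ¬G.HasC4)
    (hfree : ∀ x ∈ G.neighborSet u, (GG x).CliqueFree 3) :
    (G.spokeReplacement u GG).CliqueFree 3 := by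
  classical
  intro s hs
  obtain ⟨a, b, c, hab, hac, hbc, -⟩ := is3Clique_iff.mp hs
  have hca := hac.symm
  have no_triangle := hfan.not_triangle_of_mem_of_mem hbip hu hC4 hfree
  by_cases h₁ : a ∈ X ∧ b ∈ X
  · exact no_triangle h₁.1 h₁.2 ⟨hab, hbc, hca⟩
  by_cases h₂ : b ∈ X ∧ c ∈ X
  · exact no_triangle h₂.1 h₂.2 ⟨hbc, hca, hab⟩
  by_cases h₃ : c ∈ X ∧ a ∈ X
  · exact no_triangle h₃.1 h₃.2 ⟨hca, hab, hbc⟩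
  -- otherwise `abc` is an odd cycle of the bipartite graph `G`
  have sab := hbip.mem_iff_notMem_of_adj (hfan.adj_of_spokeReplacement_adj hbip hu hab h₁)
  have sbc := hbip.mem_iff_notMem_of_adj (hfan.adj_of_spokeReplacement_adj hbip hu hbc h₂)
  have sca := hbip.mem_iff_notMem_of_adj (hfan.adj_of_spokeReplacement_adj hbip hu hca h₃)
  tauto

theorem not_hasC4_spokeReplacement (hfan : G.IsSupportedOnFans u GG)
    (hbip : G.IsBipartitionOf X Y) (hu : u ∈ X) (hC4 : ¬G.HasC4)
    (hfree : ∀ x ∈ G.neighborSet u, ¬(GG x).HasC4) :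
    ¬(G.spokeReplacement u GG).HasC4 := by
  rintro ⟨a, b, c, d, hac, hbd, hab, hbc, hcd, hda⟩
  have no_cycle := hfan.not_cycle4_of_mem_of_mem hbip hu hC4 hfree
  by_cases h₁ : a ∈ X ∧ b ∈ X
  · exact no_cycle h₁.1 h₁.2 hac hbd ⟨hab, hbc, hcd, hda⟩
  by_cases h₂ : b ∈ X ∧ c ∈ X
  · exact no_cycle h₂.1 h₂.2 hbd hac.symm ⟨hbc, hcd, hda, hab⟩
  by_cases h₃ : c ∈ X ∧ d ∈ X
  · exact no_cycle h₃.1 h₃.2 hac.symm hbd.symm ⟨hcd, hda, hab, hbc⟩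
  by_cases h₄ : d ∈ X ∧ a ∈ X
  · exact no_cycle h₄.1 h₄.2 hbd.symm hac ⟨hda, hab, hbc, hcd⟩
  have old := hfan.adj_of_spokeReplacement_adj hbip hu
  exact hC4 ⟨a, b, c, d, hac, hbd, old hab h₁, old hbc h₂, old hcd h₃, old hda h₄⟩

end IsSupportedOnFans

end SimpleGraph

/-- Let `G` be a bipartite `C₄`-free graph with bipartition `(X, Y)` and `u ∈ X`.
For each neighbor `x` of `u`, let `GG x` be a `{C₃, C₄}`-free graph supported on the
vertex set `N(x) \ {u}`. If `H` is obtained from `G` by deleting, for each neighbor `x`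
of `u`, all edges between `x` and `N(x) \ {u}`, and adding all the edges of the graphs
`GG x`, then `H` is `{C₃, C₄}`-free. -/
theorem statement13 {V : Type*} (G : SimpleGraph V) (X Y : Set V)
    (hbip : G.IsBipartitionOf X Y) (hC4 : ¬ G.HasC4) (u : V) (hu : u ∈ X)
    (GG : V → SimpleGraph V)
    (hsupp : ∀ x ∈ G.neighborSet u, ∀ a b : V, (GG x).Adj a b →
      a ∈ G.neighborSet x \ {u} ∧ b ∈ G.neighborSet x \ {u})
    (hfree : ∀ x ∈ G.neighborSet u, (GG x).CliqueFree 3 ∧ ¬ (GG x).HasC4)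
    (H : SimpleGraph V)
    (hH : H = G.deleteEdges
        {e : Sym2 V | ∃ x ∈ G.neighborSet u, ∃ y ∈ G.neighborSet x \ {u}, e = s(x, y)}
      ⊔ ⨆ x ∈ G.neighborSet u, GG x) :
    H.CliqueFree 3 ∧ ¬ H.HasC4 := by
  have hfan : G.IsSupportedOnFans u GG := hsupp
  subst hH
  exact ⟨hfan.cliqueFree_three_spokeReplacement hbip hu hC4 fun x hx => (hfree x hx).1,
    hfan.not_hasC4_spokeReplacement hbip hu hC4 fun x hx => (hfree x hx).2⟩
end

section
/- For every prime power q, setting n = 2(q² + q + 1), one has z(n, C₄) = (q + 1)·n/2, and this quantity is at least (n/2)^{3/2}. -/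
open Finset

namespace SimpleGraph

variable {V W : Type*} {G : SimpleGraph V}

theorem HasC4.map {H : SimpleGraph W} (f : G ↪g H) (h : G.HasC4) : H.HasC4 := by
  obtain ⟨a, b, c, d, hac, hbd, hab, hbc, hcd, hda⟩ := h
  exact ⟨f a, f b, f c, f d, f.injective.ne hac, f.injective.ne hbd,
    f.map_rel_iff.2 hab, f.map_rel_iff.2 hbc, f.map_rel_iff.2 hcd, f.map_rel_iff.2 hda⟩

theorem IsBipartitionOf.comap {X Y : Set V} (h : G.IsBipartitionOf X Y) (f : W → V) :
    (G.comap f).IsBipartitionOf (f ⁻¹' X) (f ⁻¹' Y) :=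
  ⟨by rw [← Set.preimage_union, h.1, Set.preimage_univ], h.2.1.preimage f,
    fun a b hab => h.2.2 (f a) (f b) hab⟩

theorem IsBipartitionOf.exists_finset [Fintype V] {X Y : Set V} (h : G.IsBipartitionOf X Y) :
    ∃ s t : Finset V, G.IsBipartiteWith s t ∧ #s + #t = Fintype.card V := by
  classical
  refine ⟨X.toFinset, Y.toFinset, ⟨by simpa using h.2.1, by simpa using h.2.2⟩, ?_⟩
  rw [← card_union_of_disjoint (by simpa using h.2.1), ← Set.toFinset_union]
  simp [h.1]

theorem Iso.ncard_edgeSet_eq {H : SimpleGraph W} (f : G ≃g H) :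
    G.edgeSet.ncard = H.edgeSet.ncard := by
  rw [← Nat.card_coe_set_eq, ← Nat.card_coe_set_eq]
  exact Nat.card_congr f.mapEdgeSet

theorem exists_fin_isBipartitionOf_not_hasC4 [Fintype V] {X Y : Set V} {n : ℕ}
    (hn : Fintype.card V = n) (hG : G.IsBipartitionOf X Y) (h4 : ¬G.HasC4) :
    ∃ G' : SimpleGraph (Fin n), (∃ X Y, G'.IsBipartitionOf X Y) ∧ ¬G'.HasC4 ∧
      G'.edgeSet.ncard = G.edgeSet.ncard := by
  let e := (Fintype.equivFinOfCardEq hn).symm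
  exact ⟨G.comap e, ⟨_, _, hG.comap e⟩, fun h => h4 (h.map (Iso.comap e G).toEmbedding),
    (Iso.comap e G).ncard_edgeSet_eq⟩

section Reiman

variable [Fintype V] [DecidableRel G.Adj] {s t : Finset V}

theorem sum_choose_two_degree_le_of_not_hasC4 (h4 : ¬G.HasC4)
    (hts : ∀ w ∈ t, G.neighborFinset w ⊆ s) :
    ∑ w ∈ t, (G.degree w).choose 2 ≤ (#s).choose 2 := by
  classical
  have hdisj : (t : Set V).PairwiseDisjoint fun w => (G.neighborFinset w).powersetCard 2 := by
    intro v _ w _ hvw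
    refine Finset.disjoint_left.2 fun e hv hw => ?_
    rw [mem_powersetCard] at hv hw
    obtain ⟨x, y, hxy, rfl⟩ := card_eq_two.1 hv.2
    simp only [insert_subset_iff, singleton_subset_iff, mem_neighborFinset] at hv hw
    exact h4 ⟨v, x, w, y, hvw, hxy, hv.1.1, hw.1.1.symm, hw.1.2, hv.1.2.symm⟩
  calc ∑ w ∈ t, (G.degree w).choose 2
      = #(t.biUnion fun w => (G.neighborFinset w).powersetCard 2) := by
        rw [card_biUnion hdisj]
        simp only [card_powersetCard, card_neighborFinset_eq_degree]
    _ ≤ #(s.powersetCard 2) :=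
        card_le_card <| biUnion_subset.2 fun w hw => powersetCard_mono (hts w hw)
    _ = (#s).choose 2 := card_powersetCard 2 s

theorem sq_card_edgeFinset_le_of_not_hasC4 (h : G.IsBipartiteWith s t) (h4 : ¬G.HasC4) :
    (#G.edgeFinset : ℝ) ^ 2 ≤ #t * (#s * (#s - 1) + #G.edgeFinset) := by
  have hsum : ∑ w ∈ t, (G.degree w : ℝ) = #G.edgeFinset := by
    exact_mod_cast isBipartiteWith_sum_degrees_eq_card_edges' h
  have hpairs : ∑ w ∈ t, (G.degree w : ℝ) * (G.degree w - 1) ≤ #s * (#s - 1) := by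
    have hchoose : ∑ w ∈ t, ((G.degree w).choose 2 : ℝ) ≤ (#s).choose 2 := by
      exact_mod_cast sum_choose_two_degree_le_of_not_hasC4 h4
        fun w hw => isBipartiteWith_neighborFinset_subset' h hw
    simp only [Nat.cast_choose_two, ← sum_div] at hchoose
    linarith
  calc (#G.edgeFinset : ℝ) ^ 2 = (∑ w ∈ t, (G.degree w : ℝ)) ^ 2 := by rw [hsum]
    _ ≤ #t * ∑ w ∈ t, (G.degree w : ℝ) ^ 2 := sq_sum_le_card_mul_sum_sq
    _ = #t * (∑ w ∈ t, (G.degree w : ℝ) * (G.degree w - 1) + #G.edgeFinset) := by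
        rw [← hsum, ← sum_add_distrib]
        exact congrArg _ (sum_congr rfl fun _ _ => by ring)
    _ ≤ #t * (#s * (#s - 1) + #G.edgeFinset) := by gcongr

theorem card_edgeFinset_le_of_not_hasC4 {q : ℕ} (h : G.IsBipartiteWith s t)
    (hst : #s + #t = 2 * (q ^ 2 + q + 1)) (h4 : ¬G.HasC4) :
    #G.edgeFinset ≤ (q + 1) * (q ^ 2 + q + 1) := by
  suffices (#G.edgeFinset : ℝ) ≤ (q + 1) * (q ^ 2 + q + 1) by exact_mod_cast this
  have hs := sq_card_edgeFinset_le_of_not_hasC4 h h4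
  have ht := sq_card_edgeFinset_le_of_not_hasC4 h.symm h4
  have hst' : (#s : ℝ) + #t = 2 * (q ^ 2 + q + 1) := by exact_mod_cast hst
  have hprod : (#s : ℝ) * #t ≤ (q ^ 2 + q + 1) ^ 2 := by nlinarith [sq_nonneg ((#s : ℝ) - #t)]
  set e : ℝ := ((#G.edgeFinset : ℕ) : ℝ)
  set N : ℝ := q ^ 2 + q + 1
  have hsum : 2 * e ^ 2 ≤ #s * #t * (2 * N - 2) + 2 * N * e := by
    linear_combination hs + ht + (#s * #t + e : ℝ) * hst'
  have hquad : e ^ 2 ≤ N * e + N ^ 2 * (q ^ 2 + q) := by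
    have hq : (0 : ℝ) ≤ q ^ 2 + q := by positivity
    nlinarith [mul_le_mul_of_nonneg_right hprod hq]
  have hfactor : (e - (q + 1) * N) * (e + q * N) ≤ 0 := by linear_combination hquad
  by_contra! hlt
  have hqN : 0 ≤ (q : ℝ) * N := by positivity
  exact hfactor.not_gt (mul_pos (by linarith) (by linarith))

end Reiman

theorem ncard_edgeSet_le_of_isBipartitionOf_of_not_hasC4 [Fintype V] {X Y : Set V} {q : ℕ}
    (hV : Fintype.card V = 2 * (q ^ 2 + q + 1)) (hG : G.IsBipartitionOf X Y) (h4 : ¬G.HasC4) :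
    G.edgeSet.ncard ≤ (q + 1) * (q ^ 2 + q + 1) := by
  classical
  obtain ⟨s, t, hst, hcard⟩ := hG.exists_finset
  rw [Set.ncard_eq_toFinset_card', ← edgeFinset]
  exact card_edgeFinset_le_of_not_hasC4 hst (hcard.trans hV) h4

end SimpleGraph

namespace Configuration

variable (P L : Type*) [Membership P L]

def incidenceGraph : SimpleGraph (P ⊕ L) where
  Adj
    | .inl p, .inr l => p ∈ l
    | .inr l, .inl p => p ∈ l
    | _, _ => False
  symm := ⟨by rintro (_ | _) (_ | _) h <;> exact h⟩
  loopless := ⟨by rintro (_ | _) h <;> exact h⟩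

variable {P L}

@[simp] theorem incidenceGraph_adj_inl_inr {p : P} {l : L} :
    (incidenceGraph P L).Adj (.inl p) (.inr l) ↔ p ∈ l := Iff.rfl

@[simp] theorem incidenceGraph_adj_inr_inl {p : P} {l : L} :
    (incidenceGraph P L).Adj (.inr l) (.inl p) ↔ p ∈ l := Iff.rfl

@[simp] theorem not_incidenceGraph_adj_inl_inl {p p' : P} :
    ¬(incidenceGraph P L).Adj (.inl p) (.inl p') := id

@[simp] theorem not_incidenceGraph_adj_inr_inr {l l' : L} :
    ¬(incidenceGraph P L).Adj (.inr l) (.inr l') := id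

theorem incidenceGraph_isBipartitionOf :
    (incidenceGraph P L).IsBipartitionOf (Set.range .inl) (Set.range .inr) := by
  refine ⟨Set.range_inl_union_range_inr, Set.isCompl_range_inl_range_inr.disjoint, ?_⟩
  rintro (_ | _) (_ | _) h <;> simp_all

theorem incidenceGraph_not_hasC4 [Nondegenerate P L] : ¬(incidenceGraph P L).HasC4 := by
  rintro ⟨a | a, b | b, c | c, d | d, hac, hbd, hab, hbc, hcd, hda⟩ <;>
    simp only [incidenceGraph_adj_inl_inr, incidenceGraph_adj_inr_inl,
      not_incidenceGraph_adj_inl_inl, not_incidenceGraph_adj_inr_inr] at hab hbc hcd hda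
  · rcases Nondegenerate.eq_or_eq hab hbc hda hcd with rfl | rfl
    · exact hac rfl
    · exact hbd rfl
  · rcases Nondegenerate.eq_or_eq hab hda hbc hcd with rfl | rfl
    · exact hbd rfl
    · exact hac rfl

section Finite

variable [Fintype P] [Fintype L] [DecidableRel (incidenceGraph P L).Adj]

theorem incidenceGraph_degree_inl (p : P) :
    (incidenceGraph P L).degree (.inl p) = lineCount L p := by
  rw [← SimpleGraph.card_neighborSet_eq_degree, ← Nat.card_eq_fintype_card]
  have hnbhd : (incidenceGraph P L).neighborSet (.inl p) = .inr '' {l | p ∈ l} := by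
    ext (_ | _) <;> simp
  rw [hnbhd, Nat.card_image_of_injective Sum.inr_injective]
  rfl

theorem incidenceGraph_degree_inr (l : L) :
    (incidenceGraph P L).degree (.inr l) = pointCount P l := by
  rw [← SimpleGraph.card_neighborSet_eq_degree, ← Nat.card_eq_fintype_card]
  have hnbhd : (incidenceGraph P L).neighborSet (.inr l) = .inl '' {p | p ∈ l} := by
    ext (_ | _) <;> simp
  rw [hnbhd, Nat.card_image_of_injective Sum.inl_injective]
  rfl

theorem card_edgeFinset_incidenceGraph :
    #(incidenceGraph P L).edgeFinset = ∑ p, lineCount L p := by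
  have h := (incidenceGraph P L).sum_degrees_eq_twice_card_edges
  rw [Fintype.sum_sum_type] at h
  simp only [incidenceGraph_degree_inl, incidenceGraph_degree_inr,
    ← sum_lineCount_eq_sum_pointCount] at h
  omega

theorem ProjectivePlane.card_edgeFinset_incidenceGraph [ProjectivePlane P L] :
    #(incidenceGraph P L).edgeFinset = (order P L ^ 2 + order P L + 1) * (order P L + 1) := by
  simp [Configuration.card_edgeFinset_incidenceGraph, lineCount_eq, card_points P L]

end Finite

open scoped LinearAlgebra.Projectivization in
theorem ofField.order_eq_card {K : Type*} [Field K] [Finite K] [DecidableEq K] :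
    ProjectivePlane.order (ℙ K (Fin 3 → K)) (ℙ K (Fin 3 → K)) = Nat.card K := by
  have := Fintype.ofFinite (ℙ K (Fin 3 → K))
  have h := Projectivization.card_of_finrank K (Fin 3 → K) (n := 3) (by simp)
  rw [Nat.card_eq_fintype_card, ProjectivePlane.card_points _ (ℙ K (Fin 3 → K))] at h
  simp only [sum_range_succ, sum_range_zero] at h
  exact le_antisymm (by nlinarith) (by nlinarith)

end Configuration

open Configuration SimpleGraph

open scoped LinearAlgebra.Projectivization in
theorem exists_isBipartitionOf_not_hasC4_of_isPrimePow {q : ℕ} (hq : IsPrimePow q) :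
    ∃ G : SimpleGraph (Fin (2 * (q ^ 2 + q + 1))), (∃ X Y, G.IsBipartitionOf X Y) ∧
      ¬G.HasC4 ∧ G.edgeSet.ncard = (q + 1) * (q ^ 2 + q + 1) := by
  classical
  obtain ⟨p, k, hp, hk, rfl⟩ := hq
  have := Fact.mk (Nat.prime_iff.2 hp)
  let P := ℙ (GaloisField p k) (Fin 3 → GaloisField p k)
  have := Fintype.ofFinite P
  have horder : ProjectivePlane.order P P = p ^ k := by
    rw [ofField.order_eq_card, GaloisField.card p k hk.ne']
  have hcard : Fintype.card (P ⊕ P) = 2 * ((p ^ k) ^ 2 + p ^ k + 1) := by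
    rw [Fintype.card_sum, ProjectivePlane.card_points P P, horder]; ring
  obtain ⟨G, hG, h4, hedges⟩ := exists_fin_isBipartitionOf_not_hasC4 hcard
    incidenceGraph_isBipartitionOf incidenceGraph_not_hasC4
  refine ⟨G, hG, h4, ?_⟩
  rw [hedges, Set.ncard_eq_toFinset_card', ← edgeFinset,
    ProjectivePlane.card_edgeFinset_incidenceGraph, horder, mul_comm]

theorem Real.rpow_three_halves_le_mul {x y : ℝ} (hx : 0 ≤ x) (hy : 0 ≤ y) (h : x ≤ y ^ 2) :
    x ^ ((3 : ℝ) / 2) ≤ y * x := by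
  rw [show (3 : ℝ) / 2 = 1 + 1 / 2 by norm_num, rpow_add' hx (by norm_num), rpow_one,
    ← sqrt_eq_rpow, mul_comm y]
  exact mul_le_mul_of_nonneg_left ((sqrt_le_left hy).2 h) hx

/-- For every prime power `q`, with `n = 2(q² + q + 1)`, one has
`z(n, C₄) = (q + 1)·n/2 = (q + 1)(q² + q + 1)`, and this is at least `(n/2)^{3/2}`. -/
theorem statement15 : ∀ q : ℕ, IsPrimePow q → ∀ n : ℕ, n = 2 * (q ^ 2 + q + 1) →
    zC4 n = (q + 1) * (n / 2) ∧
    (((q + 1) * (n / 2) : ℕ) : ℝ) ≥ ((n : ℝ) / 2) ^ ((3 : ℝ) / 2) := by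
  intro q hq n hn
  have hhalf : n / 2 = q ^ 2 + q + 1 := by omega
  rw [hhalf]
  refine ⟨IsGreatest.csSup_eq ⟨?_, ?_⟩, ?_⟩
  · exact hn ▸ exists_isBipartitionOf_not_hasC4_of_isPrimePow hq
  · rintro _ ⟨G, ⟨X, Y, hG⟩, h4, rfl⟩
    exact ncard_edgeSet_le_of_isBipartitionOf_of_not_hasC4 (by simpa using hn) hG h4
  · have hN : (n : ℝ) / 2 = q ^ 2 + q + 1 := by rw [hn]; push_cast; ring
    rw [hN, ge_iff_le]
    push_cast
    exact Real.rpow_three_halves_le_mul (by positivity) (by positivity) (by nlinarith)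
end
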